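/- For p ∈ (1, ∞), the function b(q) := q^p · ( (1/q²)E_{1,p}(q) + (1 - 1/q²)K_{1,p}(q) ) satisfies, for all q ∈ (0, 1), b'(q) = (p-1)q^{p-1}K_{1,p}(q) + (p-1)(1 - 2/p)q^{p-3}(E_{1,p}(q) - K_{1,p}(q)) > 0; in particular b is strictly increasing on (0, 1). -/

import Mathlib

/-!
Write `J n a b q = ∫₀¹ zⁿ (1 - q²z²)ᵃ (1 - z²)ᵇ dz` (`ellipticMoment`), so that
`K₁ = J 0 (-1/2) (-1/p)` and `E₁ = J 0 (1/2) (-1/p)`. Peeling one factor `1 - q²z²`, resp. `1 - z²`, off the integrand gives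
`E₁ = K₁ - q² H` and `F = K₁ - H`, where `H = J 2 (-1/2) (-1/p)` and `F = J 0 (-1/2) (1 - 1/p)`;
hence `b(q) = q^p F(q)`. Differentiating under the integral sign, `F' = q G` with
`G = J 2 (-3/2) (1 - 1/p) ≥ 0`, so `b' = p q^(p-1) F + q^(p+1) G > 0`. Integrating the
`z`-derivative of `z (1 - q²z²)^(-1/2) (1 - z²)^(1-1/p)` over `[0, 1]` gives
`F + q² G = 2 (1 - 1/p) H`, which turns `b'` into the stated combination of `K₁` and `E₁`.
-/

open Real

/-- The complete `p`-elliptic integral of the first kind. -/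
noncomputable def K1 (p q : ℝ) : ℝ :=
  ∫ z in (0:ℝ)..1, (1 - q ^ 2 * z ^ 2) ^ (-(1/2) : ℝ) * (1 - z ^ 2) ^ (-(1 / p))

/-- The complete `p`-elliptic integral of the second kind. -/
noncomputable def E1 (p q : ℝ) : ℝ :=
  ∫ z in (0:ℝ)..1, (1 - q ^ 2 * z ^ 2) ^ ((1/2) : ℝ) * (1 - z ^ 2) ^ (-(1 / p))

/-- The function `b`. -/
noncomputable def bfun (p q : ℝ) : ℝ :=
  q ^ p * ((1 / q ^ 2) * E1 p q + (1 - 1 / q ^ 2) * K1 p q)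

open MeasureTheory Set

noncomputable def ellipticMoment (n : ℕ) (a b q : ℝ) : ℝ :=
  ∫ z in (0:ℝ)..1, z ^ n * (1 - q ^ 2 * z ^ 2) ^ a * (1 - z ^ 2) ^ b

lemma one_sub_sq_mul_sq_pos {q z : ℝ} (hq : |q| < 1) (hz : z ∈ Icc (0:ℝ) 1) :
    0 < 1 - q ^ 2 * z ^ 2 := by
  have hq2 : q ^ 2 < 1 := (sq_lt_one_iff_abs_lt_one q).2 hq
  have hz2 : z ^ 2 ≤ 1 := pow_le_one₀ hz.1 hz.2
  nlinarith [sq_nonneg q]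

lemma continuousOn_one_sub_sq_mul_sq_rpow {q : ℝ} (hq : |q| < 1) (a : ℝ) :
    ContinuousOn (fun z : ℝ => (1 - q ^ 2 * z ^ 2) ^ a) (Icc 0 1) :=
  ContinuousOn.rpow_const (by fun_prop) fun _ hz => Or.inl (one_sub_sq_mul_sq_pos hq hz).ne'

lemma intervalIntegrable_one_sub_sq_rpow {b : ℝ} (hb : -1 < b) :
    IntervalIntegrable (fun z : ℝ => (1 - z ^ 2) ^ b) volume 0 1 := by
  have h := ((intervalIntegral.intervalIntegrable_rpow' hb (a := 1) (b := 0)).comp_sub_left 1)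
  simp only [sub_self, sub_zero] at h
  refine (h.continuousOn_mul (g := fun z => (1 + z) ^ b) ?_).congr fun z hz => ?_
  · exact ContinuousOn.rpow_const (by fun_prop) fun z hz => Or.inl (by
      rw [uIcc_of_le zero_le_one] at hz; linarith [hz.1])
  · rw [uIoc_of_le zero_le_one] at hz
    rw [← mul_rpow (by linarith [hz.1]) (by linarith [hz.2])]
    ring_nf

lemma intervalIntegrable_ellipticMoment_integrand (n : ℕ) (a : ℝ) {b q : ℝ} (hq : |q| < 1)
    (hb : -1 < b) :
    IntervalIntegrable (fun z => z ^ n * (1 - q ^ 2 * z ^ 2) ^ a * (1 - z ^ 2) ^ b) volume 0 1 :=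
  (intervalIntegrable_one_sub_sq_rpow hb).continuousOn_mul <| by
    rw [uIcc_of_le zero_le_one]
    exact (continuousOn_pow n).mul (continuousOn_one_sub_sq_mul_sq_rpow hq a)

lemma ellipticMoment_add_one_left (n : ℕ) (a : ℝ) {b q : ℝ} (hq : |q| < 1) (hb : -1 < b) :
    ellipticMoment n (a + 1) b q =
      ellipticMoment n a b q - q ^ 2 * ellipticMoment (n + 2) a b q := by
  rw [ellipticMoment, ellipticMoment, ellipticMoment, ← intervalIntegral.integral_const_mul,
    ← intervalIntegral.integral_sub (intervalIntegrable_ellipticMoment_integrand n a hq hb)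
      ((intervalIntegrable_ellipticMoment_integrand (n + 2) a hq hb).const_mul _)]
  refine intervalIntegral.integral_congr fun z hz => ?_
  rw [uIcc_of_le zero_le_one] at hz
  simp only [rpow_add (one_sub_sq_mul_sq_pos hq hz), rpow_one]
  ring

lemma ellipticMoment_add_one_right (n : ℕ) (a : ℝ) {b q : ℝ} (hq : |q| < 1) (hb : -1 < b) :
    ellipticMoment n a (b + 1) q = ellipticMoment n a b q - ellipticMoment (n + 2) a b q := by
  rw [ellipticMoment, ellipticMoment, ellipticMoment,
    ← intervalIntegral.integral_sub (intervalIntegrable_ellipticMoment_integrand n a hq hb)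
      (intervalIntegrable_ellipticMoment_integrand (n + 2) a hq hb)]
  refine intervalIntegral.integral_congr fun z hz => ?_
  rw [uIcc_of_le zero_le_one] at hz
  have hz2 : 0 ≤ 1 - z ^ 2 := by nlinarith [hz.1, hz.2]
  simp only [rpow_add' hz2 (by linarith : b + 1 ≠ 0), rpow_one]
  ring

lemma ellipticMoment_pos (n : ℕ) (a : ℝ) {b q : ℝ} (hq : |q| < 1) (hb : -1 < b) :
    0 < ellipticMoment n a b q := by
  refine intervalIntegral.intervalIntegral_pos_of_pos_on
    (intervalIntegrable_ellipticMoment_integrand n a hq hb) (fun z hz => ?_) zero_lt_one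
  have hB : 0 < 1 - z ^ 2 := by nlinarith [hz.1, hz.2]
  have hA := one_sub_sq_mul_sq_pos hq (Ioo_subset_Icc_self hz)
  have := hz.1
  positivity

lemma ellipticMoment_nonneg (n : ℕ) (a b : ℝ) {q : ℝ} (hq : |q| < 1) :
    0 ≤ ellipticMoment n a b q := by
  refine intervalIntegral.integral_nonneg zero_le_one fun z hz => ?_
  have hB : 0 ≤ 1 - z ^ 2 := by nlinarith [hz.1, hz.2]
  have hA := one_sub_sq_mul_sq_pos hq hz
  have := hz.1
  positivity

lemma hasDerivAt_one_sub_sq_mul_sq_rpow {x t : ℝ} (h : 0 < 1 - x ^ 2 * t ^ 2) (a : ℝ) :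
    HasDerivAt (fun x => (1 - x ^ 2 * t ^ 2) ^ a)
      (-2 * a * x * (t ^ 2 * (1 - x ^ 2 * t ^ 2) ^ (a - 1))) x := by
  have h1 : HasDerivAt (fun x : ℝ => 1 - x ^ 2 * t ^ 2) (-(2 * x * t ^ 2)) x := by
    simpa using ((hasDerivAt_pow 2 x).mul_const (t ^ 2)).const_sub 1
  exact (h1.rpow_const (p := a) (Or.inl h.ne')).congr_deriv (by ring)

lemma hasDerivAt_ellipticMoment (n : ℕ) (a : ℝ) {b q : ℝ} (hq : |q| < 1) (hb : -1 < b) :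
    HasDerivAt (ellipticMoment n a b) (-2 * a * q * ellipticMoment (n + 2) (a - 1) b q) q := by
  obtain ⟨r, hqr, hr⟩ := exists_between hq
  have hpos : ∀ x ∈ Icc (-r) r, ∀ t ∈ Icc (0:ℝ) 1, 0 < 1 - x ^ 2 * t ^ 2 :=
    fun x hx t ht => one_sub_sq_mul_sq_pos ((abs_le.2 hx).trans_lt hr) ht
  obtain ⟨C, hC⟩ := (isCompact_Icc.prod isCompact_Icc).exists_bound_of_continuousOn
    (f := fun y : ℝ × ℝ => -2 * a * y.1 * (y.2 ^ (n + 2) * (1 - y.1 ^ 2 * y.2 ^ 2) ^ (a - 1)))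
    (ContinuousOn.mul (by fun_prop) <| ContinuousOn.mul (by fun_prop) <|
      ContinuousOn.rpow_const (by fun_prop) fun y hy => Or.inl (hpos _ hy.1 _ hy.2).ne')
  have key := intervalIntegral.hasDerivAt_integral_of_dominated_loc_of_deriv_le
    (F := fun x t => t ^ n * (1 - x ^ 2 * t ^ 2) ^ a * (1 - t ^ 2) ^ b)
    (F' := fun x t => -2 * a * x * (t ^ (n + 2) * (1 - x ^ 2 * t ^ 2) ^ (a - 1)) * (1 - t ^ 2) ^ b)
    (bound := fun t => C * (1 - t ^ 2) ^ b)
    (Ioo_mem_nhds (by linarith [neg_abs_le q] : -r < q) (by linarith [le_abs_self q] : q < r))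
    (Filter.Eventually.of_forall fun x => (by fun_prop : Measurable _).aestronglyMeasurable)
    (intervalIntegrable_ellipticMoment_integrand n a hq hb)
    (by fun_prop : Measurable _).aestronglyMeasurable
    (Filter.Eventually.of_forall fun t ht x hx => by
      rw [uIoc_of_le zero_le_one] at ht
      have hB : 0 ≤ 1 - t ^ 2 := by nlinarith [ht.1, ht.2]
      rw [norm_mul, Real.norm_of_nonneg (rpow_nonneg hB b)]
      exact mul_le_mul_of_nonneg_right
        (hC (x, t) ⟨Ioo_subset_Icc_self hx, Ioc_subset_Icc_self ht⟩) (rpow_nonneg hB b))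
    ((intervalIntegrable_one_sub_sq_rpow hb).const_mul C)
    (Filter.Eventually.of_forall fun t ht x hx => by
      rw [uIoc_of_le zero_le_one] at ht
      have hA := hasDerivAt_one_sub_sq_mul_sq_rpow
        (hpos x (Ioo_subset_Icc_self hx) t (Ioc_subset_Icc_self ht)) a
      exact ((hA.const_mul (t ^ n)).mul_const ((1 - t ^ 2) ^ b)).congr_deriv (by ring))
  refine key.2.congr_deriv ?_
  rw [ellipticMoment, ← intervalIntegral.integral_const_mul]
  refine intervalIntegral.integral_congr fun t _ => ?_
  ring

lemma ellipticMoment_integration_by_parts (n : ℕ) (a : ℝ) {b q : ℝ} (hq : |q| < 1)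
    (hb : 0 < b) :
    (n + 1) * ellipticMoment n a b q =
      2 * a * q ^ 2 * ellipticMoment (n + 2) (a - 1) b q +
        2 * b * ellipticMoment (n + 2) a (b - 1) q := by
  have hb1 : -1 < b - 1 := by linarith
  have hderiv : ∀ z ∈ Ioo (0:ℝ) 1,
      HasDerivAt (fun z => z ^ (n + 1) * (1 - q ^ 2 * z ^ 2) ^ a * (1 - z ^ 2) ^ b)
        ((n + 1) * (z ^ n * (1 - q ^ 2 * z ^ 2) ^ a * (1 - z ^ 2) ^ b) -
          2 * a * q ^ 2 * (z ^ (n + 2) * (1 - q ^ 2 * z ^ 2) ^ (a - 1) * (1 - z ^ 2) ^ b) -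
          2 * b * (z ^ (n + 2) * (1 - q ^ 2 * z ^ 2) ^ a * (1 - z ^ 2) ^ (b - 1))) z := by
    intro z hz
    have hA : HasDerivAt (fun z : ℝ => 1 - q ^ 2 * z ^ 2) (-(q ^ 2 * (2 * z))) z := by
      simpa using ((hasDerivAt_pow 2 z).const_mul (q ^ 2)).const_sub 1
    have hB : HasDerivAt (fun z : ℝ => 1 - z ^ 2) (-(2 * z)) z := by
      simpa using (hasDerivAt_pow 2 z).const_sub 1
    have hB0 : 0 < 1 - z ^ 2 := by nlinarith [hz.1, hz.2]
    refine (((hasDerivAt_pow (n + 1) z).mul (hA.rpow_const (p := a)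
      (Or.inl (one_sub_sq_mul_sq_pos hq (Ioo_subset_Icc_self hz)).ne'))).mul
      (hB.rpow_const (p := b) (Or.inl hB0.ne'))).congr_deriv ?_
    simp only [Pi.mul_apply]
    push_cast
    ring
  have hcont : ContinuousOn (fun z => z ^ (n + 1) * (1 - q ^ 2 * z ^ 2) ^ a * (1 - z ^ 2) ^ b)
      (Icc 0 1) :=
    ((continuousOn_pow _).mul (continuousOn_one_sub_sq_mul_sq_rpow hq a)).mul
      (ContinuousOn.rpow_const (by fun_prop) fun _ _ => Or.inr hb.le)
  have hJ := intervalIntegrable_ellipticMoment_integrand n a hq (by linarith : -1 < b)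
  have hJa := intervalIntegrable_ellipticMoment_integrand (n + 2) (a - 1) hq (by linarith : -1 < b)
  have hJb := intervalIntegrable_ellipticMoment_integrand (n + 2) a hq hb1
  have hFTC := intervalIntegral.integral_eq_sub_of_hasDerivAt_of_le zero_le_one hcont hderiv
    (((hJ.const_mul _).sub (hJa.const_mul _)).sub (hJb.const_mul _))
  rw [intervalIntegral.integral_sub ((hJ.const_mul _).sub (hJa.const_mul _)) (hJb.const_mul _),
    intervalIntegral.integral_sub (hJ.const_mul _) (hJa.const_mul _),
    intervalIntegral.integral_const_mul, intervalIntegral.integral_const_mul,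
    intervalIntegral.integral_const_mul] at hFTC
  simp only [one_pow, sub_self, zero_rpow hb.ne', mul_zero, zero_pow (Nat.succ_ne_zero n),
    zero_mul] at hFTC
  rw [ellipticMoment, ellipticMoment, ellipticMoment]
  linarith

lemma K1_eq_ellipticMoment (p q : ℝ) : K1 p q = ellipticMoment 0 (-(1 / 2)) (-(1 / p)) q := by
  simp only [K1, ellipticMoment, pow_zero, one_mul]

lemma E1_eq_ellipticMoment (p q : ℝ) : E1 p q = ellipticMoment 0 (-(1 / 2) + 1) (-(1 / p)) q := by
  norm_num [E1, ellipticMoment]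

lemma neg_one_lt_neg_one_div {p : ℝ} (hp : 1 < p) : -1 < -(1 / p) := by
  have : 1 / p < 1 := (div_lt_one (by linarith)).2 hp
  linarith

lemma bfun_eq_rpow_mul_ellipticMoment {p q : ℝ} (hp : 1 < p) (hq : q ∈ Ioo (0:ℝ) 1) :
    bfun p q = q ^ p * ellipticMoment 0 (-(1 / 2)) (-(1 / p) + 1) q := by
  have hq' : |q| < 1 := abs_lt.2 ⟨by linarith [hq.1], hq.2⟩
  have hq0 : q ≠ 0 := hq.1.ne'
  rw [bfun, E1_eq_ellipticMoment, K1_eq_ellipticMoment,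
    ellipticMoment_add_one_left _ _ hq' (neg_one_lt_neg_one_div hp),
    ellipticMoment_add_one_right _ _ hq' (neg_one_lt_neg_one_div hp)]
  have hcomb : ∀ K H : ℝ, 1 / q ^ 2 * (K - q ^ 2 * H) + (1 - 1 / q ^ 2) * K = K - H := by
    intro K H
    field_simp
    ring
  rw [hcomb]

noncomputable def bfunDeriv (p q : ℝ) : ℝ :=
  p * q ^ (p - 1) * ellipticMoment 0 (-(1 / 2)) (-(1 / p) + 1) q +
    q ^ p * (q * ellipticMoment 2 (-(1 / 2) - 1) (-(1 / p) + 1) q)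

lemma hasDerivAt_bfun {p q : ℝ} (hp : 1 < p) (hq : q ∈ Ioo (0:ℝ) 1) :
    HasDerivAt (bfun p) (bfunDeriv p q) q := by
  have hq' : |q| < 1 := abs_lt.2 ⟨by linarith [hq.1], hq.2⟩
  have hF := hasDerivAt_ellipticMoment 0 (-(1 / 2)) hq' (b := -(1 / p) + 1)
    (by linarith [neg_one_lt_neg_one_div hp])
  rw [zero_add] at hF
  refine (((hasDerivAt_rpow_const (p := p) (Or.inl hq.1.ne')).mul hF).congr_deriv
    (by rw [bfunDeriv]; ring)).congr_of_eventuallyEq ?_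
  filter_upwards [isOpen_Ioo.mem_nhds hq] with x hx using bfun_eq_rpow_mul_ellipticMoment hp hx

lemma bfunDeriv_pos {p q : ℝ} (hp : 1 < p) (hq : q ∈ Ioo (0:ℝ) 1) : 0 < bfunDeriv p q := by
  have hq' : |q| < 1 := abs_lt.2 ⟨by linarith [hq.1], hq.2⟩
  have hF := ellipticMoment_pos 0 (-(1 / 2)) hq' (b := -(1 / p) + 1)
    (by linarith [neg_one_lt_neg_one_div hp])
  have hG := ellipticMoment_nonneg 2 (-(1 / 2) - 1) (-(1 / p) + 1) hq'
  have hq0 := hq.1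
  have hp0 : 0 < p := by linarith
  rw [bfunDeriv]
  positivity

lemma bfunDeriv_eq {p q : ℝ} (hp : 1 < p) (hq : q ∈ Ioo (0:ℝ) 1) :
    bfunDeriv p q =
      (p - 1) * q ^ (p - 1) * K1 p q +
        (p - 1) * (1 - 2 / p) * q ^ (p - 3) * (E1 p q - K1 p q) := by
  have hq' : |q| < 1 := abs_lt.2 ⟨by linarith [hq.1], hq.2⟩
  have hb := neg_one_lt_neg_one_div hp
  have hE := ellipticMoment_add_one_left 0 (-(1 / 2)) hq' hb
  have hF := ellipticMoment_add_one_right 0 (-(1 / 2)) hq' hb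
  have hIBP := ellipticMoment_integration_by_parts 0 (-(1 / 2)) hq' (b := -(1 / p) + 1)
    (by linarith)
  rw [add_sub_cancel_right] at hIBP
  simp only [zero_add, Nat.cast_zero] at hE hF hIBP
  have h1 : q ^ (p - 1) = q ^ (p - 3) * q ^ 2 := by
    rw [← rpow_natCast, ← rpow_add hq.1, Nat.cast_ofNat]
    ring_nf
  have h2 : q ^ p = q ^ (p - 3) * q ^ 2 * q := by
    rw [← h1, ← rpow_add_one hq.1.ne', sub_add_cancel]
  rw [bfunDeriv, E1_eq_ellipticMoment, K1_eq_ellipticMoment, hE, h1, h2]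
  have hp1 : p * (1 / p) = 1 := mul_one_div_cancel (by linarith)
  generalize q ^ (p - 3) = u
  generalize ellipticMoment 2 (-(1 / 2)) (-(1 / p)) q = H at *
  linear_combination (exp := 1)
    u * q ^ 2 * hIBP + (p - 1) * u * q ^ 2 * hF - 2 * u * q ^ 2 * H * hp1

theorem bfun_deriv_pos (p : ℝ) (hp : 1 < p) :
    (∀ q ∈ Set.Ioo (0:ℝ) 1,
      HasDerivAt (bfun p)
        ((p - 1) * q ^ (p - 1) * K1 p q +
          (p - 1) * (1 - 2 / p) * q ^ (p - 3) * (E1 p q - K1 p q)) q ∧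
      0 < (p - 1) * q ^ (p - 1) * K1 p q +
          (p - 1) * (1 - 2 / p) * q ^ (p - 3) * (E1 p q - K1 p q)) ∧
    StrictMonoOn (bfun p) (Set.Ioo (0:ℝ) 1) := by
  refine ⟨fun q hq => ?_, ?_⟩
  · rw [← bfunDeriv_eq hp hq]
    exact ⟨hasDerivAt_bfun hp hq, bfunDeriv_pos hp hq⟩
  · refine strictMonoOn_of_hasDerivWithinAt_pos (f' := bfunDeriv p) (convex_Ioo 0 1)
      (fun q hq => (hasDerivAt_bfun hp hq).continuousAt.continuousWithinAt) ?_ ?_ <;>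
      rw [interior_Ioo]
    · exact fun q hq => (hasDerivAt_bfun hp hq).hasDerivWithinAt
    · exact fun q hq => bfunDeriv_pos hp hq
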